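/- arXiv:1707.07130 — 2 statements merged into one kernel-verified Lean document; each statement's English description precedes it below -/
import Mathlib

section
/- Let α be an ordinal, let τ be a Hausdorff shift-continuous topology on the α-bicyclic monoid B_α, and let (a,b) ∈ B_α with a and b nonzero, with Cantor normal forms a = a₁ω^{n₁}+⋯+a_mω^{n_m} and b = b₁ω^{k₁}+⋯+b_tω^{k_t}. Then the set V_{(a,b)} = {(a,b)} ∪ {(a₁ω^{n₁}+⋯+(a_m−1)ω^{n_m}+δ, b₁ω^{k₁}+⋯+(b_t−1)ω^{k_t}+β) : δ < ω^{n_m} and β < ω^{k_t}} is a neighborhood of the point (a,b) in the topology τ. -/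
open Ordinal Set Topology

noncomputable section

/-- The `α`-bicyclic monoid: pairs of ordinals below `ω ^ α`. -/
def Bicyclic (α : Ordinal) : Type 1 :=
  {p : Ordinal × Ordinal // p.1 < ω ^ α ∧ p.2 < ω ^ α}

namespace Bicyclic

variable {α : Ordinal}

def mk (a b : Ordinal) (ha : a < ω ^ α) (hb : b < ω ^ α) : Bicyclic α :=
  ⟨(a, b), ha, hb⟩

instance : Mul (Bicyclic α) :=
  ⟨fun x y =>
    if x.val.2 ≤ y.val.1 then
      ⟨(x.val.1 + (y.val.1 - x.val.2), y.val.2),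
        (principal_add_omega0_opow α) x.2.1
          (lt_of_le_of_lt (Ordinal.sub_le_self _ _) y.2.1),
        y.2.2⟩
    else
      ⟨(x.val.1, y.val.2 + (x.val.2 - y.val.1)),
        x.2.1,
        (principal_add_omega0_opow α) y.2.2
          (lt_of_le_of_lt (Ordinal.sub_le_self _ _) x.2.2)⟩⟩

instance : One (Bicyclic α) :=
  ⟨⟨(0, 0), opow_pos α omega0_pos, opow_pos α omega0_pos⟩⟩

end Bicyclic

/-- The Bruck extension of a semigroup `S`. -/
def Bruck (S : Type*) : Type _ := ℕ × S × ℕ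

def Bruck.mk {S : Type*} (n : ℕ) (s : S) (m : ℕ) : Bruck S := (n, s, m)

instance {S : Type*} [Mul S] : Mul (Bruck S) :=
  ⟨fun x y =>
    if x.2.2 < y.1 then (x.1 + y.1 - x.2.2, y.2.1, y.2.2)
    else if y.1 < x.2.2 then (x.1, x.2.1, y.2.2 + x.2.2 - y.1)
    else (x.1, x.2.1 * y.2.1, y.2.2)⟩

/-- The Bruck extension of `S` with an adjoined (absorbing) zero `0*`. -/
abbrev BruckZero (S : Type*) := WithZero (Bruck S)

/-- The box `[n,m]` in the Bruck extension with zero. -/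
def box (S : Type*) (n m : ℕ) : Set (BruckZero S) :=
  {x | ∃ s : S, x = ↑(Bruck.mk n s m)}

/-- A topology on `X` is shift-continuous if all two-sided shifts `x ↦ a * x * b`
are continuous. -/
def ShiftContinuous (X : Type*) [Mul X] [TopologicalSpace X] : Prop :=
  ∀ a b : X, Continuous fun x => a * x * b

/-!
In a Hausdorff shift-continuous topology the identity of `B_α` is isolated: `u = (1,1)` fixes
every `z ≠ 1` from the left or from the right, so once `U ∋ u` and `W ∋ 1` are disjoint open sets,
`1` is the only `z ∈ W` with `u * z ∈ U` and `z * u ∈ U`. Hence for `x = (a,b)` the fibre of `1`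
under the shift `y ↦ (0,a) * y * (b,0)`, namely the points `(c,d)` with `c + t = a`, `d + t = b`
for some `t`, is a neighbourhood of `x`. Those with `c < a'` are all sent by `y ↦ (0,a') * y` to
`(0,ζ)`, where `ζ` is the unique multiple of `ω^e` with `ζ + ω^e = b`, while
`(0,a') * x = (ω^e, b)`; so a neighbourhood of `x` avoids them, and symmetrically for `d < b'`
using `y ↦ y * (b',0)`. What is left of the fibre is `V`.
-/

namespace Ordinal

variable {e : Ordinal}

theorem add_omega0_opow_mul (u : Ordinal) {k : Ordinal} (hk : k ≠ 0) :
    u + ω ^ e * k = ω ^ e * (u / ω ^ e + k) := by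
  have hω : ω ^ e ≠ 0 := opow_ne_zero e omega0_ne_zero
  conv_lhs => rw [← div_add_mod u (ω ^ e), add_assoc,
    add_of_omega0_opow_le (mod_lt u hω) (le_mul_left _ hk.bot_lt)]
  rw [mul_add]

theorem omega0_opow_dvd_add (u : Ordinal) {v : Ordinal} (hv : ω ^ e ∣ v) (hv0 : v ≠ 0) :
    ω ^ e ∣ u + v := by
  obtain ⟨k, rfl⟩ := hv
  exact ⟨_, add_omega0_opow_mul u (right_ne_zero_of_mul hv0)⟩

theorem omega0_opow_dvd_sub {a c : Ordinal} (ha : ω ^ e ∣ a) (hc : c < a) : ω ^ e ∣ a - c := by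
  obtain ⟨q, rfl⟩ := ha
  have hcq : c / ω ^ e < q := (lt_mul_iff_div_lt (opow_ne_zero e omega0_ne_zero)).1 hc
  have hadd : c + ω ^ e * (q - c / ω ^ e) = ω ^ e * q := by
    rw [add_omega0_opow_mul c (Ordinal.sub_ne_zero_iff_lt.2 hcq),
      Ordinal.add_sub_cancel_of_le hcq.le]
  exact ⟨q - c / ω ^ e, by rw [← hadd, Ordinal.add_sub_cancel]⟩

theorem eq_of_add_omega0_opow_eq {ζ₁ ζ₂ : Ordinal} (h₁ : ω ^ e ∣ ζ₁) (h₂ : ω ^ e ∣ ζ₂)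
    (h : ζ₁ + ω ^ e = ζ₂ + ω ^ e) : ζ₁ = ζ₂ := by
  obtain ⟨μ₁, rfl⟩ := h₁
  obtain ⟨μ₂, rfl⟩ := h₂
  rw [← mul_add_one, ← mul_add_one] at h
  have hμ : μ₁ + 1 = μ₂ + 1 := mul_left_cancel₀ (opow_ne_zero e omega0_ne_zero) h
  rw [← Order.succ_eq_add_one, ← Order.succ_eq_add_one] at hμ
  rw [Order.succ_injective hμ]

theorem eq_sub_add_of_add_eq_add {a c t w : Ordinal} (hc : c ≤ a) (h : c + t = a + w) :
    t = a - c + w :=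
  add_left_cancel (by rw [h, ← add_assoc, Ordinal.add_sub_cancel_of_le hc])

end Ordinal

namespace ShiftContinuous

variable {X : Type*} [MulOneClass X] [TopologicalSpace X]

theorem continuous_mul_left (h : ShiftContinuous X) (a : X) : Continuous (a * ·) := by
  simpa only [mul_one] using h a 1

theorem continuous_mul_right (h : ShiftContinuous X) (b : X) : Continuous (· * b) := by
  simpa only [one_mul] using h 1 b

theorem isOpen_singleton_one [T2Space X] (h : ShiftContinuous X) {u : X} (hu : u ≠ 1)
    (hfix : ∀ z ≠ 1, u * z = z ∨ z * u = z) : IsOpen ({1} : Set X) := by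
  obtain ⟨U, W, hU, hW, huU, h1W, hUW⟩ := t2_separation hu
  suffices hO : (u * ·) ⁻¹' U ∩ (· * u) ⁻¹' U ∩ W = {1} by
    rw [← hO]
    exact (((h.continuous_mul_left u).isOpen_preimage U hU).inter
      ((h.continuous_mul_right u).isOpen_preimage U hU)).inter hW
  refine subset_antisymm ?_ (singleton_subset_iff.2 ⟨⟨?_, ?_⟩, h1W⟩)
  · rintro z ⟨⟨hzl, hzr⟩, hzW⟩
    by_contra hz
    rcases hfix z hz with hz | hz
    · exact disjoint_left.1 hUW (show u * z ∈ U from hzl) (show u * z ∈ W by rwa [hz])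
    · exact disjoint_left.1 hUW (show z * u ∈ U from hzr) (show z * u ∈ W by rwa [hz])
  · simpa only [mem_preimage, mul_one] using huU
  · simpa only [mem_preimage, one_mul] using huU

end ShiftContinuous

namespace Bicyclic

variable {α : Ordinal}

theorem mk_val (a b : Ordinal) (ha : a < ω ^ α) (hb : b < ω ^ α) : (mk a b ha hb).val = (a, b) :=
  rfl

theorem one_val : (1 : Bicyclic α).val = (0, 0) := rfl

theorem val_inj {x y : Bicyclic α} : x.val = y.val ↔ x = y := Subtype.val_inj

/-- One formula for both branches: the truncated difference `c - b` vanishes when `c ≤ b`. -/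
theorem mul_val (x y : Bicyclic α) :
    (x * y).val = (x.val.1 + (y.val.1 - x.val.2), y.val.2 + (x.val.2 - y.val.1)) := by
  by_cases h : x.val.2 ≤ y.val.1
  · have hxy : (x * y).val = (x.val.1 + (y.val.1 - x.val.2), y.val.2) :=
      congrArg Subtype.val (if_pos h)
    rw [hxy, Ordinal.sub_eq_zero_iff_le.2 h, add_zero]
  · have hxy : (x * y).val = (x.val.1, y.val.2 + (x.val.2 - y.val.1)) :=
      congrArg Subtype.val (if_neg h)
    rw [hxy, Ordinal.sub_eq_zero_iff_le.2 (not_le.1 h).le, add_zero]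

instance : MulOneClass (Bicyclic α) where
  mul := (· * ·)
  one := 1
  one_mul z := Subtype.ext <| by
    rw [mul_val, one_val]
    simp only [Ordinal.sub_zero, Ordinal.zero_sub, zero_add, add_zero]
  mul_one z := Subtype.ext <| by
    rw [mul_val, one_val]
    simp only [Ordinal.sub_zero, Ordinal.zero_sub, zero_add, add_zero]

theorem mk_one_one_mul_of_ne_zero (h1 : 1 < ω ^ α) {z : Bicyclic α} (hz : z.val.1 ≠ 0) :
    mk 1 1 h1 h1 * z = z := by
  have hz1 : 1 ≤ z.val.1 := Order.one_le_iff_ne_zero.2 hz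
  apply Subtype.ext
  rw [mul_val, mk_val, Ordinal.add_sub_cancel_of_le hz1, Ordinal.sub_eq_zero_iff_le.2 hz1,
    add_zero]

theorem mul_mk_one_one_of_ne_zero (h1 : 1 < ω ^ α) {z : Bicyclic α} (hz : z.val.2 ≠ 0) :
    z * mk 1 1 h1 h1 = z := by
  have hz1 : 1 ≤ z.val.2 := Order.one_le_iff_ne_zero.2 hz
  apply Subtype.ext
  rw [mul_val, mk_val, Ordinal.add_sub_cancel_of_le hz1, Ordinal.sub_eq_zero_iff_le.2 hz1,
    add_zero]

theorem mk_zero_mul_mul_mk_zero_eq_one_iff {a b : Ordinal} (h0 : 0 < ω ^ α) (ha : a < ω ^ α)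
    (hb : b < ω ^ α) (y : Bicyclic α) :
    mk 0 a h0 ha * y * mk b 0 hb h0 = 1 ↔ ∃ t, y.val.1 + t = a ∧ y.val.2 + t = b := by
  rw [← val_inj, mul_val, mul_val, mk_val, mk_val, one_val]
  simp only [Prod.mk.injEq, zero_add, Ordinal.add_eq_zero_iff, Ordinal.sub_eq_zero_iff_le]
  constructor
  · rintro ⟨⟨hya, hb_le⟩, hle_b⟩
    exact ⟨a - y.val.1, Ordinal.add_sub_cancel_of_le hya, le_antisymm hle_b hb_le⟩
  · rintro ⟨t, rfl, rfl⟩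
    rw [Ordinal.add_sub_cancel]
    exact ⟨⟨le_self_add, le_rfl⟩, le_rfl⟩

theorem isOpen_singleton_one [TopologicalSpace (Bicyclic α)] [T2Space (Bicyclic α)]
    (hτ : ShiftContinuous (Bicyclic α)) (hα : α ≠ 0) : IsOpen ({1} : Set (Bicyclic α)) := by
  have h1 : 1 < ω ^ α := one_lt_opow.2 ⟨one_lt_omega0, hα⟩
  refine hτ.isOpen_singleton_one (u := mk 1 1 h1 h1) (fun h => one_ne_zero
    (congrArg (fun z : Bicyclic α => z.val.1) h)) fun z hz => ?_
  by_cases hz1 : z.val.1 = 0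
  · exact .inr (mul_mk_one_one_of_ne_zero h1 fun hz2 => hz (Subtype.ext (Prod.ext hz1 hz2)))
  · exact .inl (mk_one_one_mul_of_ne_zero h1 hz1)

section Neighborhoods

variable [TopologicalSpace (Bicyclic α)]

theorem setOf_exists_add_eq_mem_nhds [T2Space (Bicyclic α)] (hτ : ShiftContinuous (Bicyclic α))
    (hα : α ≠ 0) (x : Bicyclic α) :
    {y : Bicyclic α | ∃ t, y.val.1 + t = x.val.1 ∧ y.val.2 + t = x.val.2} ∈ 𝓝 x := by
  have h0 : 0 < ω ^ α := opow_pos α omega0_pos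
  have hfib := mk_zero_mul_mul_mk_zero_eq_one_iff h0 x.2.1 x.2.2
  have hx : mk 0 x.val.1 h0 x.2.1 * x * mk x.val.2 0 x.2.2 h0 = 1 :=
    (hfib x).2 ⟨0, add_zero _, add_zero _⟩
  exact Filter.mem_of_superset
    (((isOpen_singleton_one hτ hα).preimage (hτ _ _)).mem_nhds hx) fun y hy => (hfib y).1 hy

theorem setOf_le_fst_mem_nhds [T1Space (Bicyclic α)] (hτ : ShiftContinuous (Bicyclic α))
    {e a' : Ordinal} (ha' : ω ^ e ∣ a') (x : Bicyclic α) (hx : x.val.1 = a' + ω ^ e) :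
    {y : Bicyclic α | ∀ t, y.val.1 + t = x.val.1 → y.val.2 + t = x.val.2 → a' ≤ y.val.1}
      ∈ 𝓝 x := by
  have h0 : 0 < ω ^ α := opow_pos α omega0_pos
  have ha'α : a' < ω ^ α := (le_self_add.trans_eq hx.symm).trans_lt x.2.1
  set S : Set (Bicyclic α) :=
    {z | z.val.1 = 0 ∧ ω ^ e ∣ z.val.2 ∧ z.val.2 + ω ^ e = x.val.2}
  have hS : S.Subsingleton := fun z hz w hw => Subtype.ext (Prod.ext (hz.1.trans hw.1.symm)
    (eq_of_add_omega0_opow_eq hz.2.1 hw.2.1 (hz.2.2.trans hw.2.2.symm)))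
  have hxS : mk 0 a' h0 ha'α * x ∉ S := fun hS => opow_ne_zero e omega0_ne_zero <| by
    rw [← hS.1, mul_val, mk_val, hx, zero_add, Ordinal.add_sub_cancel]
  filter_upwards [((hτ.continuous_mul_left _).isOpen_preimage _ hS.isClosed.isOpen_compl).mem_nhds
    hxS] with y hy t ht₁ ht₂
  by_contra! hlt
  refine hy ⟨?_, ?_, ?_⟩ <;> rw [mul_val, mk_val]
  · rw [zero_add, Ordinal.sub_eq_zero_iff_le.2 hlt.le]
  · exact omega0_opow_dvd_add _ (omega0_opow_dvd_sub ha' hlt) (Ordinal.sub_ne_zero_iff_lt.2 hlt)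
  · rw [add_assoc, ← eq_sub_add_of_add_eq_add hlt.le (ht₁.trans hx), ht₂]

theorem setOf_le_snd_mem_nhds [T1Space (Bicyclic α)] (hτ : ShiftContinuous (Bicyclic α))
    {f b' : Ordinal} (hb' : ω ^ f ∣ b') (x : Bicyclic α) (hx : x.val.2 = b' + ω ^ f) :
    {y : Bicyclic α | ∀ t, y.val.1 + t = x.val.1 → y.val.2 + t = x.val.2 → b' ≤ y.val.2}
      ∈ 𝓝 x := by
  have h0 : 0 < ω ^ α := opow_pos α omega0_pos
  have hb'α : b' < ω ^ α := (le_self_add.trans_eq hx.symm).trans_lt x.2.2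
  set S : Set (Bicyclic α) :=
    {z | z.val.2 = 0 ∧ ω ^ f ∣ z.val.1 ∧ z.val.1 + ω ^ f = x.val.1}
  have hS : S.Subsingleton := fun z hz w hw => Subtype.ext (Prod.ext
    (eq_of_add_omega0_opow_eq hz.2.1 hw.2.1 (hz.2.2.trans hw.2.2.symm)) (hz.1.trans hw.1.symm))
  have hxS : x * mk b' 0 hb'α h0 ∉ S := fun hS => opow_ne_zero f omega0_ne_zero <| by
    rw [← hS.1, mul_val, mk_val, hx, zero_add, Ordinal.add_sub_cancel]
  filter_upwards [((hτ.continuous_mul_right _).isOpen_preimage _ hS.isClosed.isOpen_compl).mem_nhds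
    hxS] with y hy t ht₁ ht₂
  by_contra! hlt
  refine hy ⟨?_, ?_, ?_⟩ <;> rw [mul_val, mk_val]
  · rw [zero_add, Ordinal.sub_eq_zero_iff_le.2 hlt.le]
  · exact omega0_opow_dvd_add _ (omega0_opow_dvd_sub hb' hlt) (Ordinal.sub_ne_zero_iff_lt.2 hlt)
  · rw [add_assoc, ← eq_sub_add_of_add_eq_add hlt.le (ht₂.trans hx), ht₁]

end Neighborhoods

end Bicyclic

/-- The data `(a', e)` arising from the Cantor normal form
`a = a₁ω^{n₁} + ⋯ + a_mω^{n_m}` of a nonzero ordinal, namely `e = n_m` and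
`a' = a₁ω^{n₁} + ⋯ + (a_m - 1)ω^{n_m}`, is characterized by `a = a' + ω^e` with `ω^e ∣ a'`;
similarly for `(b', f)`. -/
theorem neighborhood_of_point_general (α : Ordinal) [TopologicalSpace (Bicyclic α)]
    [T2Space (Bicyclic α)] (hτ : ShiftContinuous (Bicyclic α))
    (x : Bicyclic α)
    (e f a' b' : Ordinal)
    (hamul : ∃ q, a' = ω ^ e * q) (haeq : x.val.1 = a' + ω ^ e)
    (hbmul : ∃ q, b' = ω ^ f * q) (hbeq : x.val.2 = b' + ω ^ f) :
    ({x} ∪ {y : Bicyclic α | ∃ δ β : Ordinal, δ < ω ^ e ∧ β < ω ^ f ∧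
        y.val = (a' + δ, b' + β)} : Set (Bicyclic α)) ∈ nhds x := by
  have hα : α ≠ 0 := by
    rintro rfl
    have hx₁ : x.val.1 < 1 := opow_zero ω ▸ x.2.1
    rw [haeq, Order.lt_one_iff, add_eq_zero_iff] at hx₁
    exact opow_ne_zero e omega0_ne_zero hx₁.2
  filter_upwards [Bicyclic.setOf_exists_add_eq_mem_nhds hτ hα x,
    Bicyclic.setOf_le_fst_mem_nhds hτ hamul x haeq,
    Bicyclic.setOf_le_snd_mem_nhds hτ hbmul x hbeq] with y ⟨t, ht₁, ht₂⟩ hfst hsnd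
  rcases eq_or_ne t 0 with rfl | ht
  · rw [add_zero] at ht₁ ht₂
    exact .inl (Subtype.ext (Prod.ext ht₁ ht₂))
  · have ha' := hfst t ht₁ ht₂
    have hb' := hsnd t ht₁ ht₂
    refine .inr ⟨y.val.1 - a', y.val.2 - b',
      (Ordinal.sub_lt_of_le ha').2 (haeq ▸ ht₁ ▸ (lt_add_iff_pos_right _).2 ht.bot_lt),
      (Ordinal.sub_lt_of_le hb').2 (hbeq ▸ ht₂ ▸ (lt_add_iff_pos_right _).2 ht.bot_lt), ?_⟩
    rw [Ordinal.add_sub_cancel_of_le ha', Ordinal.add_sub_cancel_of_le hb']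

/-- Let `τ` be a Hausdorff shift-continuous topology on `B_α` and let
`(a,b) ∈ B_α` with `a, b ≠ 0`.  Writing the Cantor normal forms
`a = a₁ω^{n₁} + ⋯ + a_mω^{n_m}` and `b = b₁ω^{k₁} + ⋯ + b_tω^{k_t}`, set `e = n_m`,
`f = k_t`, `a' = a₁ω^{n₁} + ⋯ + (a_m - 1)ω^{n_m}` and
`b' = b₁ω^{k₁} + ⋯ + (b_t - 1)ω^{k_t}`.  (The data `(a', e)` arising this way from the
Cantor normal form of a nonzero ordinal `a` is characterized by: `a = a' + ω^e` and
`a'` is a multiple of `ω^e`; similarly for `(b', f)`.)  Then the set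
`V = {(a,b)} ∪ {(a' + δ, b' + β) : δ < ω^e, β < ω^f}` is a neighborhood of `(a,b)`. -/
theorem neighborhood_of_point (α : Ordinal) [TopologicalSpace (Bicyclic α)]
    [T2Space (Bicyclic α)] (hτ : ShiftContinuous (Bicyclic α))
    (x : Bicyclic α) (ha : x.val.1 ≠ 0) (hb : x.val.2 ≠ 0)
    (e f a' b' : Ordinal)
    (hamul : ∃ q, a' = ω ^ e * q) (haeq : x.val.1 = a' + ω ^ e)
    (hbmul : ∃ q, b' = ω ^ f * q) (hbeq : x.val.2 = b' + ω ^ f) :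
    ({x} ∪ {y : Bicyclic α | ∃ δ β : Ordinal, δ < ω ^ e ∧ β < ω ^ f ∧
        y.val = (a' + δ, b' + β)} : Set (Bicyclic α)) ∈ nhds x :=
  neighborhood_of_point_general α hτ x e f a' b' hamul haeq hbmul hbeq
end
end

section
/- Let k be a non-negative integer and let τ be a locally compact Hausdorff shift-continuous topology on B⁰(B_k) in which the adjoined zero 0* is not isolated. Then every open neighborhood of 0* contains all but finitely many of the elements (n,(0,0),m) with n, m non-negative integers. -/
/-!
Fix a compact neighbourhood `K` of `0*`. The elements of `B⁰(S)` having a coordinate `≥ i`,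
together with `0*`, are the union of the fixed-point sets of the shifts `x ↦ (i,1,i)·x` and
`x ↦ x·(i,1,i)`, hence a closed set; so a compact set missing `0*` has bounded coordinates.
Applied to `K \ θ⁻¹(int K)`, this shows that every shift `θ` maps the elements of `K` with a
large coordinate back into `K`. As `0*` is not isolated, `K` contains some `(a,s,b)` with `b`
large. Shifting it to the right, collapsing it to a unit with `(0,1,a+1)·_` and shifting to the
left puts every `(n,1,m)` with `m` large into `K`; the right shift by `(1,1,0)`, which lowers
`m`, then brings in every `(n,1,m)` with `n` large.
-/

open Ordinal Set Topology

noncomputable section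

namespace Bicyclic

variable {α : Ordinal}

theorem val_mul (x y : Bicyclic α) :
    (x * y).val =
      if x.val.2 ≤ y.val.1 then (x.val.1 + (y.val.1 - x.val.2), y.val.2)
      else (x.val.1, y.val.2 + (x.val.2 - y.val.1)) :=
  apply_ite Subtype.val _ _ _

instance inst_s6 : MulOneClass (Bicyclic α) where
  toMul := inferInstance
  toOne := inferInstance
  one_mul x := Subtype.ext <| by
    rw [val_mul]
    simp [show (1 : Bicyclic α).val = (0, 0) from rfl]
  mul_one x := Subtype.ext <| by
    rw [val_mul]
    split_ifs
    · simp_all [show (1 : Bicyclic α).val = (0, 0) from rfl, Prod.ext_iff]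
    · simp [show (1 : Bicyclic α).val = (0, 0) from rfl]

end Bicyclic

namespace Bruck

variable {S : Type*}

theorem exists_eq_mk (x : Bruck S) : ∃ a s b, x = mk a s b := ⟨x.1, x.2.1, x.2.2, rfl⟩

theorem mk_inj {a b c d : ℕ} {s t : S} : mk a s b = mk c t d ↔ a = c ∧ s = t ∧ b = d :=
  Prod.ext_iff.trans <| and_congr_right' Prod.ext_iff

variable [MulOneClass S] {a b c n : ℕ} {s : S}

theorem mk_one_mul_mk_of_le (h : c ≤ a) : mk n 1 c * mk a s b = mk (n + a - c) s b := by
  rcases h.lt_or_eq with h | rfl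
  · exact if_pos h
  · show (if c < c then _ else if c < c then _ else (n, 1 * s, b)) = _
    simp [mk]

theorem mk_one_mul_mk_of_lt (h : a < c) : mk n 1 c * mk a s b = mk n 1 (b + c - a) :=
  (if_neg h.not_gt).trans (if_pos h)

theorem mk_mul_mk_one_of_le (h : c ≤ b) : mk a s b * mk c 1 n = mk a s (n + b - c) := by
  rcases h.lt_or_eq with h | rfl
  · exact (if_neg h.not_gt).trans (if_pos h)
  · show (if c < c then _ else if c < c then _ else (a, s * 1, n)) = _
    simp [mk]

theorem mk_mul_mk_one_of_lt (h : b < c) : mk a s b * mk c 1 n = mk (a + c - b) 1 n :=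
  if_pos h

theorem mk_one_mul_mk_eq_self_iff : mk c 1 c * mk a s b = mk a s b ↔ c ≤ a := by
  refine ⟨fun h => ?_, fun h => by rw [mk_one_mul_mk_of_le h, Nat.add_sub_cancel_left]⟩
  by_contra! hlt
  rw [mk_one_mul_mk_of_lt hlt, mk_inj] at h
  omega

theorem mk_mul_mk_one_eq_self_iff : mk a s b * mk c 1 c = mk a s b ↔ c ≤ b := by
  refine ⟨fun h => ?_, fun h => by rw [mk_mul_mk_one_of_le h, Nat.add_sub_cancel_left]⟩
  by_contra! hlt
  rw [mk_mul_mk_one_of_lt hlt, mk_inj] at h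
  omega

@[simp] theorem mk_zero_one_zero_mul (x : Bruck S) : mk 0 1 0 * x = x := by
  obtain ⟨a, s, b, rfl⟩ := exists_eq_mk x
  simp [mk_one_mul_mk_of_le]

@[simp] theorem mul_mk_zero_one_zero (x : Bruck S) : x * mk 0 1 0 = x := by
  obtain ⟨a, s, b, rfl⟩ := exists_eq_mk x
  simp [mk_mul_mk_one_of_le]

theorem coe_mul_coe_mul_coe (p x q : Bruck S) :
    (↑p * ↑x * ↑q : BruckZero S) = ↑(p * x * q) := by
  simp only [WithZero.coe_mul]

section Topology

variable [TopologicalSpace (BruckZero S)] {K : Set (BruckZero S)}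

theorem exists_mk_mem_of_not_isOpen (hτ : ShiftContinuous (BruckZero S))
    (h0 : ¬IsOpen ({0} : Set (BruckZero S))) (hK0 : K ∈ 𝓝 0) (N : ℕ) :
    ∃ (a : ℕ) (s : S) (b : ℕ), N ≤ b ∧ (↑(mk a s b) : BruckZero S) ∈ K := by
  have : (𝓝[≠] (0 : BruckZero S)).NeBot := ⟨by rwa [Ne, ← isOpen_singleton_iff_punctured_nhds]⟩
  have hθ : ∀ᶠ x in 𝓝 (0 : BruckZero S),
      (↑(mk 0 (1 : S) 0) : BruckZero S) * x * ↑(mk 0 (1 : S) N) ∈ K :=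
    (hτ _ _).continuousAt.preimage_mem_nhds (by simpa using hK0)
  obtain ⟨x, hxK, hx0⟩ :=
    ((hθ.filter_mono nhdsWithin_le_nhds).and (self_mem_nhdsWithin (s := {0}ᶜ))).exists
  obtain ⟨y, rfl⟩ := WithZero.ne_zero_iff_exists.mp hx0
  obtain ⟨a, s, b, rfl⟩ := exists_eq_mk y
  refine ⟨a, s, N + b, by omega, ?_⟩
  simpa [coe_mul_coe_mul_coe, mk_mul_mk_one_of_le] using hxK

variable [T2Space (BruckZero S)]

theorem exists_lt_of_isCompact (hτ : ShiftContinuous (BruckZero S))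
    {C : Set (BruckZero S)} (hC : IsCompact C) (h0 : (0 : BruckZero S) ∉ C) :
    ∃ N, ∀ a (s : S) b, (↑(mk a s b) : BruckZero S) ∈ C → a < N ∧ b < N := by
  let F : ℕ → Set (BruckZero S) := fun i =>
    {x | ↑(mk i (1 : S) i) * x * ↑(mk 0 (1 : S) 0) = x} ∪
      {x | ↑(mk 0 (1 : S) 0) * x * ↑(mk i (1 : S) i) = x}
  have hF : ∀ i, IsOpen (F i)ᶜ := fun i =>
    ((isClosed_eq (hτ _ _) continuous_id).union (isClosed_eq (hτ _ _) continuous_id)).isOpen_compl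
  have hmem : ∀ i a (s : S) b, (↑(mk a s b) : BruckZero S) ∈ F i ↔ i ≤ a ∨ i ≤ b := by
    intro i a s b
    simp only [F, Set.mem_union, Set.mem_ofPred_eq, coe_mul_coe_mul_coe, WithZero.coe_inj,
      mk_zero_one_zero_mul, mul_mk_zero_one_zero, mk_one_mul_mk_eq_self_iff,
      mk_mul_mk_one_eq_self_iff]
  have hcover : C ⊆ ⋃ i, (F i)ᶜ := by
    intro x hx
    obtain ⟨y, rfl⟩ := WithZero.ne_zero_iff_exists.mp (ne_of_mem_of_not_mem hx h0)
    obtain ⟨a, s, b, rfl⟩ := exists_eq_mk y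
    exact Set.mem_iUnion.mpr ⟨max a b + 1, by rw [Set.mem_compl_iff, hmem]; omega⟩
  obtain ⟨T, hT⟩ := hC.elim_finite_subcover _ hF hcover
  obtain ⟨N, hN⟩ := T.exists_nat_subset_range
  refine ⟨N, fun a s b hx => ?_⟩
  obtain ⟨i, hi, hxi⟩ := Set.mem_iUnion₂.mp (hT hx)
  rw [Set.mem_compl_iff, hmem] at hxi
  have := Finset.mem_range.mp (hN hi)
  omega

theorem exists_mul_mk_mul_mem (hτ : ShiftContinuous (BruckZero S)) (hK : IsCompact K)
    (hK0 : K ∈ 𝓝 0) (p q : Bruck S) :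
    ∃ N, ∀ a (s : S) b, N ≤ a ∨ N ≤ b → (↑(mk a s b) : BruckZero S) ∈ K →
      (↑(p * mk a s b * q) : BruckZero S) ∈ K := by
  let θ := fun x : BruckZero S => ↑p * x * ↑q
  have hC : IsCompact (K \ θ ⁻¹' interior K) := hK.diff (isOpen_interior.preimage (hτ _ _))
  obtain ⟨N, hN⟩ := exists_lt_of_isCompact hτ hC (by simp [θ, mem_interior_iff_mem_nhds, hK0])
  refine ⟨N, fun a s b hab hx => ?_⟩
  by_contra h
  have := hN a s b ⟨hx, fun h' => h (interior_subset (coe_mul_coe_mul_coe p _ q ▸ h'))⟩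
  omega

theorem exists_mk_mem_of_le_right (hτ : ShiftContinuous (BruckZero S)) (hK : IsCompact K)
    (hK0 : K ∈ 𝓝 0) :
    ∃ N, ∀ a (s : S) b, N ≤ b → (↑(mk a s b) : BruckZero S) ∈ K →
      ∀ b', b ≤ b' → (↑(mk a s b') : BruckZero S) ∈ K := by
  obtain ⟨N, hN⟩ := exists_mul_mk_mul_mem hτ hK hK0 (mk 0 1 0) (mk 0 1 1)
  refine ⟨N, fun a s b hb hx b' hb' => ?_⟩
  induction b', hb' using Nat.le_induction with
  | base => exact hx
  | succ b' hbb' ih =>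
    simpa [mk_mul_mk_one_of_le, add_comm] using hN a s b' (Or.inr (hb.trans hbb')) ih

theorem exists_mk_mem_of_le_left (hτ : ShiftContinuous (BruckZero S)) (hK : IsCompact K)
    (hK0 : K ∈ 𝓝 0) :
    ∃ N, ∀ a (s : S) b, N ≤ b → (↑(mk a s b) : BruckZero S) ∈ K →
      ∀ a', a ≤ a' → (↑(mk a' s b) : BruckZero S) ∈ K := by
  obtain ⟨N, hN⟩ := exists_mul_mk_mul_mem hτ hK hK0 (mk 1 1 0) (mk 0 1 0)
  refine ⟨N, fun a s b hb hx a' ha' => ?_⟩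
  induction a', ha' using Nat.le_induction with
  | base => exact hx
  | succ a' _ ih =>
    simpa [mk_one_mul_mk_of_le, add_comm] using hN a' s b (Or.inr hb) ih

theorem exists_mk_mem_of_ge_right (hτ : ShiftContinuous (BruckZero S)) (hK : IsCompact K)
    (hK0 : K ∈ 𝓝 0) :
    ∃ N, ∀ a (s : S) b, N ≤ a → (↑(mk a s b) : BruckZero S) ∈ K →
      ∀ b', b' ≤ b → (↑(mk a s b') : BruckZero S) ∈ K := by
  obtain ⟨N, hN⟩ := exists_mul_mk_mul_mem hτ hK hK0 (mk 0 1 0) (mk 1 1 0)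
  refine ⟨N, fun a s b ha hx b' hb' => ?_⟩
  induction hb' using Nat.decreasingInduction with
  | self => exact hx
  | of_succ b' _ ih =>
    simpa [mk_mul_mk_one_of_le] using hN a s (b' + 1) (Or.inl ha) ih

theorem exists_forall_mk_one_mem (hτ : ShiftContinuous (BruckZero S))
    (h0 : ¬IsOpen ({0} : Set (BruckZero S))) (hK : IsCompact K) (hK0 : K ∈ 𝓝 0) :
    ∃ q, ∀ p m, q ≤ m → (↑(mk p (1 : S) m) : BruckZero S) ∈ K := by
  obtain ⟨NR, hR⟩ := exists_mk_mem_of_le_right hτ hK hK0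
  obtain ⟨NL, hL⟩ := exists_mk_mem_of_le_left hτ hK hK0
  obtain ⟨a, s, b, hb, hx⟩ := exists_mk_mem_of_not_isOpen hτ h0 hK0 NR
  -- `(0,1,a+1) · (a,s,m-1) = (0,1,m)`: multiplying on the left forgets `s`.
  obtain ⟨NP, hP⟩ := exists_mul_mk_mul_mem hτ hK hK0 (mk 0 1 (a + 1)) (mk 0 1 0)
  refine ⟨max (max b NP + 1) NL, fun p m hm => hL 0 1 m (by omega) ?_ p p.zero_le⟩
  have := hP a s (m - 1) (Or.inr (by omega)) (hR a s b hb hx (m - 1) (by omega))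
  rwa [mul_mk_zero_one_zero, mk_one_mul_mk_of_lt (by omega),
    show m - 1 + (a + 1) - a = m by omega] at this

theorem finite_setOf_mk_one_not_mem [LocallyCompactSpace (BruckZero S)]
    (hτ : ShiftContinuous (BruckZero S)) (h0 : ¬IsOpen ({0} : Set (BruckZero S)))
    {U : Set (BruckZero S)} (hU : U ∈ 𝓝 0) :
    {p : ℕ × ℕ | (↑(mk p.1 (1 : S) p.2) : BruckZero S) ∉ U}.Finite := by
  obtain ⟨K, hK0, hKU, hK⟩ := local_compact_nhds hU
  obtain ⟨q, hq⟩ := exists_forall_mk_one_mem hτ h0 hK hK0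
  obtain ⟨P, hP⟩ := exists_mk_mem_of_ge_right hτ hK hK0
  refine ((Set.finite_Iio P).prod (Set.finite_Iio q)).subset fun ⟨p, m⟩ hpm => ?_
  by_contra h
  refine hpm (hKU ?_)
  rcases le_or_gt q m with hm | hm
  · exact hq p m hm
  · exact hP p 1 q (not_lt.mp fun hp => h ⟨hp, hm⟩) (hq p q le_rfl) m hm.le

end Topology

end Bruck

/-- For a locally compact Hausdorff shift-continuous topology on `B⁰(B_k)`
with non-isolated zero, every open neighborhood of `0*` contains all but finitely many
of the elements `(n,(0,0),m)`, `n, m ∈ ω`. -/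
theorem neighborhood_contains_cofinitely_many_units (k : ℕ)
    [TopologicalSpace (BruckZero (Bicyclic k))] [T2Space (BruckZero (Bicyclic k))]
    [LocallyCompactSpace (BruckZero (Bicyclic k))]
    (hτ : ShiftContinuous (BruckZero (Bicyclic k)))
    (h0 : ¬ IsOpen ({0} : Set (BruckZero (Bicyclic k))))
    (U : Set (BruckZero (Bicyclic k)))
    (hU : IsOpen U) (h0U : (0 : BruckZero (Bicyclic k)) ∈ U) :
    {p : ℕ × ℕ |
      (↑(Bruck.mk p.1 (1 : Bicyclic k) p.2) : BruckZero (Bicyclic k)) ∉ U}.Finite :=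
  Bruck.finite_setOf_mk_one_not_mem hτ h0 (hU.mem_nhds h0U)
end
end
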